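/- arXiv:1710.00591 — 5 statements merged into one kernel-verified Lean document; each statement's English description precedes it below -/
import Mathlib

section
/- Let δ > 0, let x : ℝ → ℝ² be a differentiable curve satisfying x'(t) = T(x(t)) for all t, and let θ : ℝ → ℝ be a differentiable function with f(x(t)) = (δ·cos θ(t), δ·sin θ(t)) for all t. Then θ'(t) = 2·J(x(t)) for all t; in particular, for any t₀, θ'(t₀) = 0 if and only if J(x(t₀)) = 0. -/
noncomputable section

/-- The partial derivative of `f : ℝ² → ℝ` in the direction `e`. -/
def pd2 (e : ℝ × ℝ) (f : ℝ × ℝ → ℝ) : ℝ × ℝ → ℝ := fun p => fderiv ℝ f p e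

lemma fd_eval (f : ℝ × ℝ → ℝ) (p v : ℝ × ℝ) :
    fderiv ℝ f p v = v.1 * pd2 (1, 0) f p + v.2 * pd2 (0, 1) f p := by
  have hv : v = v.1 • ((1, 0) : ℝ × ℝ) + v.2 • ((0, 1) : ℝ × ℝ) := by
    simp [Prod.ext_iff]
  calc fderiv ℝ f p v = fderiv ℝ f p (v.1 • ((1, 0) : ℝ × ℝ) + v.2 • ((0, 1) : ℝ × ℝ)) := by
        rw [← hv]
    _ = v.1 * pd2 (1, 0) f p + v.2 * pd2 (0, 1) f p := by
        rw [map_add, (fderiv ℝ f p).map_smul, (fderiv ℝ f p).map_smul]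
        rfl

/-- For a `C^∞` map `f = (f₁, f₂) : ℝ² → ℝ²` with `g = f₁² + f₂²`, Jacobian determinant `J`,
and `T = (−∂g/∂x₂, ∂g/∂x₁)`: if `δ > 0`, `x : ℝ → ℝ²` is a differentiable curve with
`x'(t) = T(x(t))` for all `t`, and `θ : ℝ → ℝ` is differentiable with
`f(x(t)) = (δ·cos θ(t), δ·sin θ(t))` for all `t`, then `θ'(t) = 2·J(x(t))` for all `t`;
in particular `θ'(t₀) = 0 ↔ J(x(t₀)) = 0` for any `t₀`. -/
theorem theta_deriv (f₁ f₂ : ℝ × ℝ → ℝ)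
    (hf₁ : ContDiff ℝ (⊤ : ℕ∞) f₁) (hf₂ : ContDiff ℝ (⊤ : ℕ∞) f₂)
    (g : ℝ × ℝ → ℝ) (hg : g = fun p => f₁ p ^ 2 + f₂ p ^ 2)
    (J : ℝ × ℝ → ℝ)
    (hJ : J = fun p =>
      pd2 (1, 0) f₁ p * pd2 (0, 1) f₂ p - pd2 (0, 1) f₁ p * pd2 (1, 0) f₂ p)
    (T : ℝ × ℝ → ℝ × ℝ)
    (hT : T = fun p => (-(pd2 (0, 1) g p), pd2 (1, 0) g p))
    (δ : ℝ) (hδ : 0 < δ)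
    (x : ℝ → ℝ × ℝ) (hx : Differentiable ℝ x)
    (hxT : ∀ t, deriv x t = T (x t))
    (θ : ℝ → ℝ) (hθ : Differentiable ℝ θ)
    (hfx : ∀ t, f₁ (x t) = δ * Real.cos (θ t) ∧ f₂ (x t) = δ * Real.sin (θ t)) :
    (∀ t, deriv θ t = 2 * J (x t)) ∧
      ∀ t₀, (deriv θ t₀ = 0 ↔ J (x t₀) = 0) := by
  have hd1 : Differentiable ℝ f₁ := hf₁.differentiable (by simp)
  have hd2 : Differentiable ℝ f₂ := hf₂.differentiable (by simp)
  have hgd : ∀ e p, pd2 e g p = 2 * f₁ p * pd2 e f₁ p + 2 * f₂ p * pd2 e f₂ p := by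
    intro e p
    have h1 : HasFDerivAt (fun q => f₁ q ^ 2) ((2 * f₁ p) • fderiv ℝ f₁ p) p := by
      have h := (hd1 p).hasFDerivAt.mul (hd1 p).hasFDerivAt
      simpa [pow_two, two_mul, add_smul, Pi.mul_def] using h
    have h2 : HasFDerivAt (fun q => f₂ q ^ 2) ((2 * f₂ p) • fderiv ℝ f₂ p) p := by
      have h := (hd2 p).hasFDerivAt.mul (hd2 p).hasFDerivAt
      simpa [pow_two, two_mul, add_smul, Pi.mul_def] using h
    have h3 : HasFDerivAt g ((2 * f₁ p) • fderiv ℝ f₁ p + (2 * f₂ p) • fderiv ℝ f₂ p) p := by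
      rw [hg]; exact h1.add h2
    have h4 := h3.fderiv
    simp only [pd2, h4, ContinuousLinearMap.add_apply, ContinuousLinearMap.coe_smul',
      Pi.smul_apply, smul_eq_mul]
  have key : ∀ t, deriv θ t = 2 * J (x t) := by
    intro t
    set p := x t with hp
    have hxd : HasDerivAt x (T p) t := by
      have h := (hx t).hasDerivAt
      rwa [hxT t] at h
    have hA : HasDerivAt (fun s => f₁ (x s)) (fderiv ℝ f₁ p (T p)) t :=
      (hd1 p).hasFDerivAt.comp_hasDerivAt t hxd
    have hB : HasDerivAt (fun s => f₂ (x s)) (fderiv ℝ f₂ p (T p)) t :=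
      (hd2 p).hasFDerivAt.comp_hasDerivAt t hxd
    have hθt : HasDerivAt θ (deriv θ t) t := (hθ t).hasDerivAt
    have hA' : HasDerivAt (fun s => f₁ (x s)) (δ * (-Real.sin (θ t) * deriv θ t)) t := by
      have he : (fun s => f₁ (x s)) = fun s => δ * Real.cos (θ s) :=
        funext fun s => (hfx s).1
      rw [he]
      exact hθt.cos.const_mul δ
    have hB' : HasDerivAt (fun s => f₂ (x s)) (δ * (Real.cos (θ t) * deriv θ t)) t := by
      have he : (fun s => f₂ (x s)) = fun s => δ * Real.sin (θ s) :=
        funext fun s => (hfx s).2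
      rw [he]
      exact hθt.sin.const_mul δ
    have e1 : (T p).1 * pd2 (1, 0) f₁ p + (T p).2 * pd2 (0, 1) f₁ p
        = δ * (-Real.sin (θ t) * deriv θ t) := by
      rw [← fd_eval]; exact hA.unique hA'
    have e2 : (T p).1 * pd2 (1, 0) f₂ p + (T p).2 * pd2 (0, 1) f₂ p
        = δ * (Real.cos (θ t) * deriv θ t) := by
      rw [← fd_eval]; exact hB.unique hB'
    have hT1 : (T p).1 = -(2 * f₁ p * pd2 (0, 1) f₁ p + 2 * f₂ p * pd2 (0, 1) f₂ p) := by
      rw [hT]; simp [hgd]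
    have hT2 : (T p).2 = 2 * f₁ p * pd2 (1, 0) f₁ p + 2 * f₂ p * pd2 (1, 0) f₂ p := by
      rw [hT]; simp [hgd]
    rw [hT1, hT2] at e1 e2
    have h1 := (hfx t).1
    have h2 := (hfx t).2
    rw [h1, h2] at e1 e2
    have hcs : Real.sin (θ t) ^ 2 + Real.cos (θ t) ^ 2 = 1 := Real.sin_sq_add_cos_sq _
    have hJp : J p = pd2 (1, 0) f₁ p * pd2 (0, 1) f₂ p - pd2 (0, 1) f₁ p * pd2 (1, 0) f₂ p := by
      rw [hJ]
    have hδ2 : (δ : ℝ) ^ 2 ≠ 0 := pow_ne_zero _ hδ.ne'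
    have hmain : δ ^ 2 * deriv θ t = δ ^ 2 * (2 * J p) := by
      rw [hJp]
      linear_combination δ * Real.sin (θ t) * e1 - δ * Real.cos (θ t) * e2 +
        (2 * δ ^ 2 *
          (pd2 (1, 0) f₁ p * pd2 (0, 1) f₂ p - pd2 (0, 1) f₁ p * pd2 (1, 0) f₂ p)
          - δ ^ 2 * deriv θ t) * hcs
    exact mul_left_cancel₀ hδ2 hmain
  refine ⟨key, fun t₀ => ?_⟩
  rw [key t₀]
  constructor <;> intro h <;> linarith
end
end

section
/- Let δ > 0, let x : ℝ → ℝ² be a differentiable curve satisfying x'(t) = T(x(t)) for all t, and let θ : ℝ → ℝ be a twice differentiable function with f(x(t)) = (δ·cos θ(t), δ·sin θ(t)) for all t. If θ'(t₀) = 0 (equivalently J(x(t₀)) = 0) at some t₀, then θ''(t₀) = 4·(f₁·F₁ + f₂·F₂)(x(t₀)); in particular the sign of θ''(t₀) equals the sign of (f₁·F₁ + f₂·F₂)(x(t₀)). -/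
noncomputable section

lemma pd2_contDiff (e : ℝ × ℝ) {u : ℝ × ℝ → ℝ} (hu : ContDiff ℝ (⊤ : ℕ∞) u) :
    ContDiff ℝ (⊤ : ℕ∞) (pd2 e u) :=
  (hu.fderiv_right (by simp)).clm_apply contDiff_const

lemma fderiv_pair (u : ℝ × ℝ → ℝ) (p : ℝ × ℝ) (a b : ℝ) :
    fderiv ℝ u p (a, b) = a * pd2 (1, 0) u p + b * pd2 (0, 1) u p := by
  have h : (a, b) = a • ((1:ℝ), (0:ℝ)) + b • ((0:ℝ), (1:ℝ)) := by
    simp [Prod.ext_iff]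
  rw [h, map_add, map_smul, map_smul]
  simp [pd2, smul_eq_mul]

lemma sign_four_mul (a : ℝ) : Real.sign (4 * a) = Real.sign a := by
  rcases lt_trichotomy a 0 with h | h | h
  · rw [Real.sign_of_neg h, Real.sign_of_neg (by linarith)]
  · simp [h]
  · rw [Real.sign_of_pos h, Real.sign_of_pos (by linarith)]

/-- For a `C^∞` map `f = (f₁, f₂) : ℝ² → ℝ²` with `g = f₁² + f₂²`, Jacobian determinant `J`,
`F_i = ∂(f_i, J)/∂(x₁, x₂)`, and `T = (−∂g/∂x₂, ∂g/∂x₁)`: if `δ > 0`, `x : ℝ → ℝ²` is a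
differentiable curve with `x'(t) = T(x(t))`, and `θ : ℝ → ℝ` is twice differentiable with
`f(x(t)) = (δ·cos θ(t), δ·sin θ(t))` for all `t`, then at any `t₀` with `θ'(t₀) = 0`
(equivalently `J(x(t₀)) = 0`) one has `θ''(t₀) = 4·(f₁·F₁ + f₂·F₂)(x(t₀))`; in particular
the sign of `θ''(t₀)` equals the sign of `(f₁·F₁ + f₂·F₂)(x(t₀))`. -/
theorem theta_second_deriv (f₁ f₂ : ℝ × ℝ → ℝ)
    (hf₁ : ContDiff ℝ (⊤ : ℕ∞) f₁) (hf₂ : ContDiff ℝ (⊤ : ℕ∞) f₂)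
    (g : ℝ × ℝ → ℝ) (hg : g = fun p => f₁ p ^ 2 + f₂ p ^ 2)
    (J : ℝ × ℝ → ℝ)
    (hJ : J = fun p =>
      pd2 (1, 0) f₁ p * pd2 (0, 1) f₂ p - pd2 (0, 1) f₁ p * pd2 (1, 0) f₂ p)
    (F₁ F₂ : ℝ × ℝ → ℝ)
    (hF₁ : F₁ = fun p =>
      pd2 (1, 0) f₁ p * pd2 (0, 1) J p - pd2 (0, 1) f₁ p * pd2 (1, 0) J p)
    (hF₂ : F₂ = fun p =>
      pd2 (1, 0) f₂ p * pd2 (0, 1) J p - pd2 (0, 1) f₂ p * pd2 (1, 0) J p)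
    (T : ℝ × ℝ → ℝ × ℝ)
    (hT : T = fun p => (-(pd2 (0, 1) g p), pd2 (1, 0) g p))
    (δ : ℝ) (hδ : 0 < δ)
    (x : ℝ → ℝ × ℝ) (hx : Differentiable ℝ x)
    (hxT : ∀ t, deriv x t = T (x t))
    (θ : ℝ → ℝ) (hθ : Differentiable ℝ θ) (hθ' : Differentiable ℝ (deriv θ))
    (hfx : ∀ t, f₁ (x t) = δ * Real.cos (θ t) ∧ f₂ (x t) = δ * Real.sin (θ t))
    (t₀ : ℝ) (ht₀ : deriv θ t₀ = 0) :
    deriv (deriv θ) t₀ =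
        4 * (f₁ (x t₀) * F₁ (x t₀) + f₂ (x t₀) * F₂ (x t₀)) ∧
      Real.sign (deriv (deriv θ) t₀) =
        Real.sign (f₁ (x t₀) * F₁ (x t₀) + f₂ (x t₀) * F₂ (x t₀)) := by
  have hd₁ : Differentiable ℝ f₁ := hf₁.differentiable (by simp)
  have hd₂ : Differentiable ℝ f₂ := hf₂.differentiable (by simp)
  have hJc : ContDiff ℝ (⊤ : ℕ∞) J := by
    rw [hJ]
    exact ((pd2_contDiff _ hf₁).mul (pd2_contDiff _ hf₂)).sub
      ((pd2_contDiff _ hf₁).mul (pd2_contDiff _ hf₂))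
  have hJd : Differentiable ℝ J := hJc.differentiable (by simp)
  -- partial derivatives of g
  have hgp : ∀ (e p : ℝ × ℝ),
      pd2 e g p = 2 * f₁ p * pd2 e f₁ p + 2 * f₂ p * pd2 e f₂ p := by
    intro e p
    have h1 : HasFDerivAt g
        (f₁ p • fderiv ℝ f₁ p + f₁ p • fderiv ℝ f₁ p +
          (f₂ p • fderiv ℝ f₂ p + f₂ p • fderiv ℝ f₂ p)) p := by
      rw [hg]
      simp only [pow_two]
      exact ((hd₁ p).hasFDerivAt.mul (hd₁ p).hasFDerivAt).add
        ((hd₂ p).hasFDerivAt.mul (hd₂ p).hasFDerivAt)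
    have := h1.fderiv
    simp only [pd2, this, ContinuousLinearMap.add_apply, ContinuousLinearMap.smul_apply,
      smul_eq_mul]
    ring
  -- chain rule along the curve
  have hcomp : ∀ (u : ℝ × ℝ → ℝ), Differentiable ℝ u → ∀ t,
      deriv (fun s => u (x s)) t = fderiv ℝ u (x t) (T (x t)) := by
    intro u hu t
    have h : HasDerivAt (fun s => u (x s)) (fderiv ℝ u (x t) (deriv x t)) t :=
      (hu (x t)).hasFDerivAt.comp_hasDerivAt t (hx t).hasDerivAt
    rw [h.deriv, hxT t]
  -- θ' = 2 J ∘ x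
  have hθ'eq : ∀ t, deriv θ t = 2 * J (x t) := by
    intro t
    have hsum : f₁ (x t) ^ 2 + f₂ (x t) ^ 2 = δ ^ 2 := by
      rw [(hfx t).1, (hfx t).2]
      have := Real.sin_sq_add_cos_sq (θ t)
      nlinarith [this]
    have e1 : (fun s => f₁ (x s)) = fun s => δ * Real.cos (θ s) :=
      funext fun s => (hfx s).1
    have e2 : (fun s => f₂ (x s)) = fun s => δ * Real.sin (θ s) :=
      funext fun s => (hfx s).2
    have dc : deriv (fun s => δ * Real.cos (θ s)) t
        = δ * (-Real.sin (θ t) * deriv θ t) :=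
      (((Real.hasDerivAt_cos (θ t)).comp t (hθ t).hasDerivAt).const_mul δ).deriv
    have ds : deriv (fun s => δ * Real.sin (θ s)) t
        = δ * (Real.cos (θ t) * deriv θ t) :=
      (((Real.hasDerivAt_sin (θ t)).comp t (hθ t).hasDerivAt).const_mul δ).deriv
    have hT1 : fderiv ℝ f₁ (x t) (T (x t)) = -(2 * f₂ (x t) * J (x t)) := by
      rw [hT]
      simp only
      rw [fderiv_pair, hgp, hgp, hJ]
      ring
    have hT2 : fderiv ℝ f₂ (x t) (T (x t)) = 2 * f₁ (x t) * J (x t) := by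
      rw [hT]
      simp only
      rw [fderiv_pair, hgp, hgp, hJ]
      ring
    have A : -(2 * f₂ (x t) * J (x t)) = δ * (-Real.sin (θ t) * deriv θ t) := by
      rw [← hT1, ← hcomp f₁ hd₁ t, e1, dc]
    have B : 2 * f₁ (x t) * J (x t) = δ * (Real.cos (θ t) * deriv θ t) := by
      rw [← hT2, ← hcomp f₂ hd₂ t, e2, ds]
    have A' : f₂ (x t) * deriv θ t = 2 * f₂ (x t) * J (x t) := by
      rw [(hfx t).2] at *
      nlinarith [A]
    have B' : f₁ (x t) * deriv θ t = 2 * f₁ (x t) * J (x t) := by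
      rw [(hfx t).1] at *
      nlinarith [B]
    have h0 : (deriv θ t - 2 * J (x t)) * δ ^ 2 = 0 := by
      linear_combination f₁ (x t) * B' + f₂ (x t) * A'
        - (deriv θ t - 2 * J (x t)) * hsum
    have hδ2 : δ ^ 2 ≠ 0 := pow_ne_zero 2 hδ.ne'
    have := (mul_eq_zero.mp h0).resolve_right hδ2
    linarith
  have hθ'fun : deriv θ = fun t => 2 * J (x t) := funext hθ'eq
  -- second derivative
  have hdd : deriv (deriv θ) t₀ = 2 * fderiv ℝ J (x t₀) (T (x t₀)) := by
    rw [hθ'fun]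
    have h : HasDerivAt (fun t => 2 * J (x t)) (2 * fderiv ℝ J (x t₀) (deriv x t₀)) t₀ :=
      ((hJd (x t₀)).hasFDerivAt.comp_hasDerivAt t₀ (hx t₀).hasDerivAt).const_mul 2
    rw [h.deriv, hxT t₀]
  have hmain : deriv (deriv θ) t₀ =
      4 * (f₁ (x t₀) * F₁ (x t₀) + f₂ (x t₀) * F₂ (x t₀)) := by
    rw [hdd, hT]
    simp only
    rw [fderiv_pair, hgp, hgp, hF₁, hF₂]
    ring
  refine ⟨hmain, ?_⟩
  rw [hmain, sign_four_mul]
end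
end

section
/- Let δ > 0, let x : ℝ → ℝ² be a differentiable curve satisfying x'(t) = T(x(t)) for all t, and let θ : ℝ → ℝ be a twice differentiable function with f(x(t)) = (δ·cos θ(t), δ·sin θ(t)) for all t. Then for any t₀: θ'(t₀) = 0 and θ''(t₀) ≠ 0 (i.e., x(t₀) is a non-degenerate critical point) if and only if J(x(t₀)) = 0 and (f₁·F₁ + f₂·F₂)(x(t₀)) ≠ 0. -/
noncomputable section

lemma fderiv_pair_apply (f : ℝ × ℝ → ℝ) (p : ℝ × ℝ) (a b : ℝ) :
    fderiv ℝ f p (a, b) = a * pd2 (1, 0) f p + b * pd2 (0, 1) f p := by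
  have h : ((a, b) : ℝ × ℝ) = a • ((1 : ℝ), (0 : ℝ)) + b • ((0 : ℝ), (1 : ℝ)) := by
    simp [Prod.ext_iff]
  rw [h, map_add, map_smul, map_smul]
  simp [pd2, smul_eq_mul]

lemma pd2_contDiff_s3 (f : ℝ × ℝ → ℝ) (hf : ContDiff ℝ (⊤ : ℕ∞) f) (e : ℝ × ℝ) :
    ContDiff ℝ (⊤ : ℕ∞) (pd2 e f) :=
  (hf.fderiv_right (by simp)).clm_apply contDiff_const

/-- For a `C^∞` map `f = (f₁, f₂) : ℝ² → ℝ²` with `g = f₁² + f₂²`, Jacobian determinant `J`,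
`F_i = ∂(f_i, J)/∂(x₁, x₂)`, and `T = (−∂g/∂x₂, ∂g/∂x₁)`: if `δ > 0`, `x : ℝ → ℝ²` is a
differentiable curve with `x\'(t) = T(x(t))`, and `θ : ℝ → ℝ` is twice differentiable with
`f(x(t)) = (δ·cos θ(t), δ·sin θ(t))` for all `t`, then for any `t₀`:
`θ\'(t₀) = 0` and `θ\'\'(t₀) ≠ 0` (i.e. `x(t₀)` is a non-degenerate critical point) if and only if
`J(x(t₀)) = 0` and `(f₁·F₁ + f₂·F₂)(x(t₀)) ≠ 0`. -/
theorem nondegenerate_critical_point_iff (f₁ f₂ : ℝ × ℝ → ℝ)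
    (hf₁ : ContDiff ℝ (⊤ : ℕ∞) f₁) (hf₂ : ContDiff ℝ (⊤ : ℕ∞) f₂)
    (g : ℝ × ℝ → ℝ) (hg : g = fun p => f₁ p ^ 2 + f₂ p ^ 2)
    (J : ℝ × ℝ → ℝ)
    (hJ : J = fun p =>
      pd2 (1, 0) f₁ p * pd2 (0, 1) f₂ p - pd2 (0, 1) f₁ p * pd2 (1, 0) f₂ p)
    (F₁ F₂ : ℝ × ℝ → ℝ)
    (hF₁ : F₁ = fun p =>
      pd2 (1, 0) f₁ p * pd2 (0, 1) J p - pd2 (0, 1) f₁ p * pd2 (1, 0) J p)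
    (hF₂ : F₂ = fun p =>
      pd2 (1, 0) f₂ p * pd2 (0, 1) J p - pd2 (0, 1) f₂ p * pd2 (1, 0) J p)
    (T : ℝ × ℝ → ℝ × ℝ)
    (hT : T = fun p => (-(pd2 (0, 1) g p), pd2 (1, 0) g p))
    (δ : ℝ) (hδ : 0 < δ)
    (x : ℝ → ℝ × ℝ) (hx : Differentiable ℝ x)
    (hxT : ∀ t, deriv x t = T (x t))
    (θ : ℝ → ℝ) (hθ : Differentiable ℝ θ) (hθ' : Differentiable ℝ (deriv θ))
    (hfx : ∀ t, f₁ (x t) = δ * Real.cos (θ t) ∧ f₂ (x t) = δ * Real.sin (θ t))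
    (t₀ : ℝ) :
    (deriv θ t₀ = 0 ∧ deriv (deriv θ) t₀ ≠ 0) ↔
      (J (x t₀) = 0 ∧ f₁ (x t₀) * F₁ (x t₀) + f₂ (x t₀) * F₂ (x t₀) ≠ 0) := by
  have hd₁ : Differentiable ℝ f₁ := hf₁.differentiable (by simp)
  have hd₂ : Differentiable ℝ f₂ := hf₂.differentiable (by simp)
  -- derivative of g
  have hgfd : ∀ p, HasFDerivAt g
      ((2 * f₁ p) • fderiv ℝ f₁ p + (2 * f₂ p) • fderiv ℝ f₂ p) p := by
    intro p
    have h1 := (hd₁ p).hasFDerivAt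
    have h2 := (hd₂ p).hasFDerivAt
    have h := (h1.mul h1).add (h2.mul h2)
    have e : (fun q => f₁ q * f₁ q + f₂ q * f₂ q) = g := by
      rw [hg]; funext q; ring
    rw [show f₁ * f₁ + f₂ * f₂ = g from e] at h
    rw [two_mul, two_mul, add_smul, add_smul]
    exact h
  have hgp : ∀ p e, pd2 e g p =
      2 * f₁ p * pd2 e f₁ p + 2 * f₂ p * pd2 e f₂ p := by
    intro p e
    show fderiv ℝ g p e = _
    rw [(hgfd p).fderiv]
    simp [pd2, smul_eq_mul]
  -- J is smooth
  have hJc : ContDiff ℝ (⊤ : ℕ∞) J := by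
    rw [hJ]
    exact ((pd2_contDiff_s3 f₁ hf₁ _).mul (pd2_contDiff_s3 f₂ hf₂ _)).sub
      ((pd2_contDiff_s3 f₁ hf₁ _).mul (pd2_contDiff_s3 f₂ hf₂ _))
  have hJd : Differentiable ℝ J := hJc.differentiable (by simp)
  -- chain rule along the curve
  have key : ∀ (φ : ℝ × ℝ → ℝ), Differentiable ℝ φ → ∀ t,
      HasDerivAt (fun s => φ (x s)) (fderiv ℝ φ (x t) (T (x t))) t := by
    intro φ hφ t
    have h := (hφ (x t)).hasFDerivAt.comp_hasDerivAt t (hx t).hasDerivAt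
    rwa [hxT t] at h
  -- f₁ along the curve
  have h1t : ∀ t, HasDerivAt (fun s => f₁ (x s)) (-2 * f₂ (x t) * J (x t)) t := by
    intro t
    have h := key f₁ hd₁ t
    have e : fderiv ℝ f₁ (x t) (T (x t)) = -2 * f₂ (x t) * J (x t) := by
      simp only [hT]
      rw [fderiv_pair_apply, hgp, hgp]
      simp only [hJ]
      ring
    rwa [e] at h
  have h2t : ∀ t, HasDerivAt (fun s => f₂ (x s)) (2 * f₁ (x t) * J (x t)) t := by
    intro t
    have h := key f₂ hd₂ t
    have e : fderiv ℝ f₂ (x t) (T (x t)) = 2 * f₁ (x t) * J (x t) := by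
      simp only [hT]
      rw [fderiv_pair_apply, hgp, hgp]
      simp only [hJ]
      ring
    rwa [e] at h
  -- derivatives of the polar expressions
  have hc : ∀ t, HasDerivAt (fun s => δ * Real.cos (θ s))
      (δ * (-Real.sin (θ t) * deriv θ t)) t := fun t =>
    ((Real.hasDerivAt_cos (θ t)).comp t (hθ t).hasDerivAt).const_mul δ
  -- θ' = 2 J ∘ x
  have hθJ : ∀ t, deriv θ t = 2 * J (x t) := by
    intro t
    have e1fun : (fun s => f₁ (x s)) = fun s => δ * Real.cos (θ s) :=
      funext fun s => (hfx s).1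
    have e2fun : (fun s => f₂ (x s)) = fun s => δ * Real.sin (θ s) :=
      funext fun s => (hfx s).2
    have E1 : δ * (-Real.sin (θ t) * deriv θ t) = -2 * f₂ (x t) * J (x t) := by
      have h := h1t t
      rw [e1fun] at h
      exact (hc t).unique h
    have E2 : δ * (Real.cos (θ t) * deriv θ t) = 2 * f₁ (x t) * J (x t) := by
      have h := h2t t
      rw [e2fun] at h
      have hs' : HasDerivAt (fun s => δ * Real.sin (θ s))
          (δ * (Real.cos (θ t) * deriv θ t)) t :=
        ((Real.hasDerivAt_sin (θ t)).comp t (hθ t).hasDerivAt).const_mul δ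
      exact hs'.unique h
    rw [(hfx t).1] at E2
    rw [(hfx t).2] at E1
    have Epyth : Real.sin (θ t) ^ 2 + Real.cos (θ t) ^ 2 = 1 :=
      Real.sin_sq_add_cos_sq (θ t)
    have h2 : δ ^ 2 * deriv θ t = δ ^ 2 * (2 * J (x t)) := by
      linear_combination (-(δ * Real.sin (θ t))) * E1 + (δ * Real.cos (θ t)) * E2 +
        (δ ^ 2 * (2 * J (x t) - deriv θ t)) * Epyth
    exact mul_left_cancel₀ (pow_ne_zero 2 hδ.ne') h2
  -- θ'' at t₀
  have hθ'' : deriv (deriv θ) t₀ =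
      4 * (f₁ (x t₀) * F₁ (x t₀) + f₂ (x t₀) * F₂ (x t₀)) := by
    have hkey := key J hJd t₀
    have hD : HasDerivAt (deriv θ) (2 * fderiv ℝ J (x t₀) (T (x t₀))) t₀ := by
      rw [show deriv θ = fun s => 2 * J (x s) from funext hθJ]
      exact hkey.const_mul 2
    rw [hD.deriv]
    have e : fderiv ℝ J (x t₀) (T (x t₀)) =
        2 * (f₁ (x t₀) * F₁ (x t₀) + f₂ (x t₀) * F₂ (x t₀)) := by
      simp only [hT]
      rw [fderiv_pair_apply, hgp, hgp]
      simp only [hF₁, hF₂]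
      ring
    rw [e]; ring
  -- conclude
  rw [hθJ t₀, hθ'']
  constructor
  · rintro ⟨h1, h2⟩
    exact ⟨by linarith, fun hcon => h2 (by rw [hcon]; ring)⟩
  · rintro ⟨h1, h2⟩
    exact ⟨by rw [h1]; ring, fun hcon => h2 (by linarith)⟩
end
end

section
/- The identity (∂J/∂x₁)·(∂g/∂x₂) − (∂J/∂x₂)·(∂g/∂x₁) = −2·(f₁·F₁ + f₂·F₂) holds at every point of ℝ². In particular, at any point where the gradients ∇J and ∇g are linearly independent, one has (f₁·F₁ + f₂·F₂) ≠ 0. -/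
noncomputable section

/-- For a `C^∞` map `f = (f₁, f₂) : ℝ² → ℝ²` with `g = f₁² + f₂²`, Jacobian determinant `J`
and `F_i = ∂(f_i, J)/∂(x₁, x₂)`, the identity
`(∂J/∂x₁)·(∂g/∂x₂) − (∂J/∂x₂)·(∂g/∂x₁) = −2·(f₁·F₁ + f₂·F₂)` holds at every point of `ℝ²`.
In particular, at any point where the gradients `∇J` and `∇g` are linearly independent, one
has `(f₁·F₁ + f₂·F₂) ≠ 0`. -/
theorem cross_product_identity (f₁ f₂ : ℝ × ℝ → ℝ)
    (hf₁ : ContDiff ℝ (⊤ : ℕ∞) f₁) (hf₂ : ContDiff ℝ (⊤ : ℕ∞) f₂)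
    (g : ℝ × ℝ → ℝ) (hg : g = fun p => f₁ p ^ 2 + f₂ p ^ 2)
    (J : ℝ × ℝ → ℝ)
    (hJ : J = fun p =>
      pd2 (1, 0) f₁ p * pd2 (0, 1) f₂ p - pd2 (0, 1) f₁ p * pd2 (1, 0) f₂ p)
    (F₁ F₂ : ℝ × ℝ → ℝ)
    (hF₁ : F₁ = fun p =>
      pd2 (1, 0) f₁ p * pd2 (0, 1) J p - pd2 (0, 1) f₁ p * pd2 (1, 0) J p)
    (hF₂ : F₂ = fun p =>
      pd2 (1, 0) f₂ p * pd2 (0, 1) J p - pd2 (0, 1) f₂ p * pd2 (1, 0) J p) :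
    (∀ p : ℝ × ℝ,
      pd2 (1, 0) J p * pd2 (0, 1) g p - pd2 (0, 1) J p * pd2 (1, 0) g p =
        -2 * (f₁ p * F₁ p + f₂ p * F₂ p)) ∧
      ∀ p : ℝ × ℝ,
        LinearIndependent ℝ
          ![(pd2 (1, 0) J p, pd2 (0, 1) J p), (pd2 (1, 0) g p, pd2 (0, 1) g p)] →
        f₁ p * F₁ p + f₂ p * F₂ p ≠ 0 := by
  have key : ∀ (p : ℝ × ℝ) (e : ℝ × ℝ), fderiv ℝ g p e =
      2 * f₁ p * fderiv ℝ f₁ p e + 2 * f₂ p * fderiv ℝ f₂ p e := by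
    intro p e
    have h1 := (hf₁.differentiable (by simp) p).hasFDerivAt
    have h2 := (hf₂.differentiable (by simp) p).hasFDerivAt
    have hs : HasFDerivAt g
        ((f₁ p • fderiv ℝ f₁ p + f₁ p • fderiv ℝ f₁ p) +
          (f₂ p • fderiv ℝ f₂ p + f₂ p • fderiv ℝ f₂ p)) p := by
      rw [hg]
      simp only [pow_two]
      exact (h1.mul h1).add (h2.mul h2)
    rw [hs.fderiv]
    simp only [ContinuousLinearMap.add_apply, ContinuousLinearMap.coe_smul',
      Pi.smul_apply, smul_eq_mul]
    ring
  have main : ∀ p : ℝ × ℝ,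
      pd2 (1, 0) J p * pd2 (0, 1) g p - pd2 (0, 1) J p * pd2 (1, 0) g p =
        -2 * (f₁ p * F₁ p + f₂ p * F₂ p) := by
    intro p
    simp only [hF₁, hF₂, pd2, key p]
    ring
  refine ⟨main, fun p hli h0 => ?_⟩
  have hdet : pd2 (1, 0) J p * pd2 (0, 1) g p - pd2 (0, 1) J p * pd2 (1, 0) g p = 0 := by
    rw [main p, h0]; ring
  rw [linearIndependent_fin2] at hli
  obtain ⟨hw, ha⟩ := hli
  simp only [Matrix.cons_val_one, Matrix.head_cons, Matrix.cons_val_zero, ne_eq,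
    Prod.mk.injEq, Prod.ext_iff, Prod.smul_mk, smul_eq_mul] at hw ha
  set a := pd2 (1, 0) J p
  set b := pd2 (0, 1) J p
  set c := pd2 (1, 0) g p
  set d := pd2 (0, 1) g p
  by_cases hc : c = 0
  · by_cases hd : d = 0
    · exact hw ⟨hc, hd⟩
    · exact ha (b / d) ⟨by field_simp; nlinarith [hdet], by field_simp⟩
  · exact ha (a / c) ⟨by field_simp, by field_simp; nlinarith [hdet]⟩
end
end

section
/- Let I ⊆ O₃ be an ideal with dim_ℝ O₃/I < ∞, let σ : ℝ³ → ℝ³ be the map σ(t,x₁,x₂) = (t², x₁, x₂), and let I∘σ denote the ideal of O₃ generated by all germs h∘σ with h ∈ I. Then dim_ℝ O₃/(I∘σ) < ∞. -/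
open Filter Topology

noncomputable section

set_option synthInstance.maxHeartbeats 1000000
set_option maxHeartbeats 1000000

/-- The scalar action of `ℝ` on germs of real functions makes the germ ring an `ℝ`-algebra. -/
instance germAlgebra {α : Type*} (l : Filter α) : Algebra ℝ (Filter.Germ l ℝ) :=
  Algebra.ofModule
    (fun r x y => Filter.Germ.inductionOn₂ x y fun f g => by
      rw [← Filter.Germ.coe_smul, ← Filter.Germ.coe_mul, ← Filter.Germ.coe_mul,
        ← Filter.Germ.coe_smul, smul_mul_assoc])
    (fun r x y => Filter.Germ.inductionOn₂ x y fun f g => by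
      rw [← Filter.Germ.coe_smul, ← Filter.Germ.coe_mul, ← Filter.Germ.coe_mul,
        ← Filter.Germ.coe_smul, mul_smul_comm])

/-- The local ring `O₃` of germs at the origin of real-analytic functions `ℝ³ → ℝ`,
where `ℝ³ = ℝ × ℝ × ℝ` has coordinates `(t, x₁, x₂)`. -/
def O3 : Subalgebra ℝ (Filter.Germ (𝓝 (0 : ℝ × ℝ × ℝ)) ℝ) where
  carrier := {g | ∃ f : ℝ × ℝ × ℝ → ℝ, AnalyticAt ℝ f 0 ∧
    g = (f : Filter.Germ (𝓝 (0 : ℝ × ℝ × ℝ)) ℝ)}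
  mul_mem' := by
    rintro a b ⟨f, hf, rfl⟩ ⟨g, hg, rfl⟩
    exact ⟨f * g, hf.mul hg, (Filter.Germ.coe_mul f g).symm⟩
  add_mem' := by
    rintro a b ⟨f, hf, rfl⟩ ⟨g, hg, rfl⟩
    exact ⟨f + g, hf.add hg, (Filter.Germ.coe_add f g).symm⟩
  algebraMap_mem' := fun r => ⟨fun _ => r, analyticAt_const, by
    rw [Algebra.algebraMap_eq_smul_one, ← Filter.Germ.coe_one, ← Filter.Germ.coe_smul]
    congr 1
    funext x
    simp⟩

/-- The element of `O₃` determined by a function analytic at the origin. -/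
def toO3 (f : ℝ × ℝ × ℝ → ℝ) (hf : AnalyticAt ℝ f 0) : O3 :=
  ⟨(f : Filter.Germ (𝓝 (0 : ℝ × ℝ × ℝ)) ℝ), f, hf, rfl⟩

/-- The germ of the coordinate function `t`. -/
def tO3 : O3 := toO3 (fun p => p.1) analyticAt_fst

/-- Directional (partial) derivative of a function `ℝ³ → ℝ` in the direction `e`. -/
def pd (e : ℝ × ℝ × ℝ) (f : ℝ × ℝ × ℝ → ℝ) : ℝ × ℝ × ℝ → ℝ :=
  fun p => fderiv ℝ f p e

theorem AnalyticAt.pd {f : ℝ × ℝ × ℝ → ℝ} (hf : AnalyticAt ℝ f 0) (e : ℝ × ℝ × ℝ) :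
    AnalyticAt ℝ (pd e f) 0 :=
  ((ContinuousLinearMap.apply ℝ ℝ e).analyticAt (fderiv ℝ f 0)).comp hf.fderiv

/-- The unit vectors in the directions `t`, `x₁`, `x₂`. -/
def et : ℝ × ℝ × ℝ := (1, 0, 0)
def ex1 : ℝ × ℝ × ℝ := (0, 1, 0)
def ex2 : ℝ × ℝ × ℝ := (0, 0, 1)

/-- The Jacobian determinant `∂(u,v)/∂(y,z)` where `y, z` are the directions `e₁, e₂`. -/
def jac (e₁ e₂ : ℝ × ℝ × ℝ) (u v : ℝ × ℝ × ℝ → ℝ) : ℝ × ℝ × ℝ → ℝ :=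
  fun p => pd e₁ u p * pd e₂ v p - pd e₂ u p * pd e₁ v p

theorem AnalyticAt.jac {u v : ℝ × ℝ × ℝ → ℝ} (hu : AnalyticAt ℝ u 0)
    (hv : AnalyticAt ℝ v 0) (e₁ e₂ : ℝ × ℝ × ℝ) : AnalyticAt ℝ (jac e₁ e₂ u v) 0 :=
  ((hu.pd e₁).mul (hv.pd e₂)).sub ((hu.pd e₂).mul (hv.pd e₁))

/-- The map `σ(t, x₁, x₂) = (t², x₁, x₂)`. -/
def sigma3 : ℝ × ℝ × ℝ → ℝ × ℝ × ℝ := fun p => (p.1 ^ 2, p.2)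

theorem sigma3_zero : sigma3 0 = 0 := by simp [sigma3]

theorem sigma3_tendsto : Filter.Tendsto sigma3 (𝓝 (0 : ℝ × ℝ × ℝ)) (𝓝 (0 : ℝ × ℝ × ℝ)) := by
  have hc : Continuous sigma3 := by
    unfold sigma3; fun_prop
  simpa [sigma3_zero] using hc.tendsto (0 : ℝ × ℝ × ℝ)

theorem AnalyticAt.compSigma3 {f : ℝ × ℝ × ℝ → ℝ} (hf : AnalyticAt ℝ f 0) :
    AnalyticAt ℝ (f ∘ sigma3) 0 := by
  have hσ : AnalyticAt ℝ sigma3 0 :=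
    (analyticAt_fst.pow 2).prod analyticAt_snd
  exact AnalyticAt.comp (by rwa [sigma3_zero]) hσ

/-- Substitution `t ↦ t²` on germs at the origin, induced by `σ`. -/
def compSigmaO3 (g : O3) : O3 := by
  refine ⟨(g : Filter.Germ (𝓝 (0 : ℝ × ℝ × ℝ)) ℝ).compTendsto sigma3 sigma3_tendsto, ?_⟩
  obtain ⟨f, hf, hfg⟩ := g.2
  exact ⟨f ∘ sigma3, hf.compSigma3, by rw [hfg]; rfl⟩

/-! ### Auxiliary development -/

section Aux

open Filter

/-- Hadamard-type lemma: an analytic function vanishing at the origin of `ℝ³` is a combination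
`v.1 * a v + v.2.1 * b v + v.2.2 * c v` with `a, b, c` analytic at the origin. -/
theorem hadamard3 {f : ℝ × ℝ × ℝ → ℝ} (hf : AnalyticAt ℝ f 0) (hf0 : f 0 = 0) :
    ∃ a b c : ℝ × ℝ × ℝ → ℝ, AnalyticAt ℝ a 0 ∧ AnalyticAt ℝ b 0 ∧ AnalyticAt ℝ c 0 ∧
      ∀ᶠ v in 𝓝 (0 : ℝ × ℝ × ℝ), f v = v.1 * a v + v.2.1 * b v + v.2.2 * c v := by
  obtain ⟨p, r, hpr⟩ : ∃ p r, HasFPowerSeriesOnBall f p 0 r := by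
    obtain ⟨p, hp⟩ := hf
    obtain ⟨r, hr⟩ := hp
    exact ⟨p, r, hr⟩
  obtain ⟨ρ, hρ0, hρr⟩ : ∃ ρ : NNReal, (0 : ENNReal) < ρ ∧ (ρ : ENNReal) < r :=
    ENNReal.lt_iff_exists_nnreal_btwn.1 hpr.r_pos
  have hρ0' : (0 : NNReal) < ρ := by exact_mod_cast hρ0
  -- the shifted series
  set q : (ℝ × ℝ × ℝ) → FormalMultilinearSeries ℝ (ℝ × ℝ × ℝ) ℝ :=
    fun e n => (p (n + 1)).curryLeft e with hq
  have hqn : ∀ e n, ‖q e n‖ ≤ ‖p (n + 1)‖ * ‖e‖ := by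
    intro e n
    apply ContinuousMultilinearMap.opNorm_le_bound
      (mul_nonneg (norm_nonneg _) (norm_nonneg _))
    intro m
    exact (p (n + 1)).norm_map_cons_le e m
  have hrad : ∀ e, (ρ : ENNReal) ≤ (q e).radius := by
    intro e
    obtain ⟨C, hC0, hC⟩ := p.norm_mul_pow_le_of_lt_radius (lt_of_lt_of_le hρr hpr.r_le)
    apply (q e).le_radius_of_bound (C * ‖e‖ / ρ)
    intro n
    have h1 : ‖q e n‖ * (ρ : ℝ) ^ n ≤ (‖p (n + 1)‖ * ‖e‖) * (ρ : ℝ) ^ n :=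
      mul_le_mul_of_nonneg_right (hqn e n) (by positivity)
    have h2 : (‖p (n + 1)‖ * ‖e‖) * (ρ : ℝ) ^ n
        = (‖p (n + 1)‖ * (ρ : ℝ) ^ (n + 1)) * ‖e‖ / ρ := by
      field_simp
      ring
    have h3 : (‖p (n + 1)‖ * (ρ : ℝ) ^ (n + 1)) * ‖e‖ / ρ ≤ C * ‖e‖ / ρ := by
      gcongr
      exact hC (n + 1)
    linarith
  have hqpos : ∀ e, 0 < (q e).radius := fun e => lt_of_lt_of_le hρ0 (hrad e)
  set g : (ℝ × ℝ × ℝ) → (ℝ × ℝ × ℝ) → ℝ := fun e v => (q e).sum v with hg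
  have hga : ∀ e, AnalyticAt ℝ (g e) 0 :=
    fun e => ((q e).hasFPowerSeriesOnBall (hqpos e)).analyticAt
  refine ⟨g et, g ex1, g ex2, hga et, hga ex1, hga ex2, ?_⟩
  have hball : EMetric.ball (0 : ℝ × ℝ × ℝ) ρ ∈ 𝓝 (0 : ℝ × ℝ × ℝ) :=
    EMetric.ball_mem_nhds _ hρ0
  filter_upwards [hball] with v hv
  have hvr : v ∈ EMetric.ball (0 : ℝ × ℝ × ℝ) r := EMetric.ball_subset_ball hρr.le hv
  have hsum_f : HasSum (fun n => p n fun _ => v) (f v) := by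
    simpa using hpr.hasSum hvr
  have h0 : (p 0 fun _ => v) = 0 := by
    have : (p 0 fun _ => v) = f 0 := by
      have := hpr.coeff_zero (fun _ => v)
      simpa using this
    rw [this, hf0]
  have hsum_f' : HasSum (fun m => p (m + 1) fun _ => v) (f v) := by
    refine (hasSum_nat_add_iff (f := fun n => p n fun _ => v) 1).2 ?_
    simpa [h0] using hsum_f
  have hsum_q : ∀ e, HasSum (fun m => q e m fun _ => v) (g e v) := by
    intro e
    exact (q e).hasSum (lt_of_lt_of_le hv (hrad e))
  -- termwise identity
  have hterm : ∀ m : ℕ, (p (m + 1) fun _ => v)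
      = v.1 * (q et m fun _ => v) + v.2.1 * (q ex1 m fun _ => v)
        + v.2.2 * (q ex2 m fun _ => v) := by
    intro m
    have hcons : (fun _ : Fin (m + 1) => v) = Fin.cons v (fun _ : Fin m => v) := by
      funext i
      refine Fin.cases ?_ ?_ i <;> simp
    have hv' : v = v.1 • et + (v.2.1 • ex1 + v.2.2 • ex2) := by
      simp [et, ex1, ex2, Prod.ext_iff]
    have key : ∀ w : Fin m → ℝ × ℝ × ℝ,
        p (m + 1) (Fin.cons v w)
          = v.1 * p (m + 1) (Fin.cons et w) + v.2.1 * p (m + 1) (Fin.cons ex1 w)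
            + v.2.2 * p (m + 1) (Fin.cons ex2 w) := by
      intro w
      conv_lhs => rw [hv']
      rw [ContinuousMultilinearMap.cons_add, ContinuousMultilinearMap.cons_add,
        ContinuousMultilinearMap.cons_smul, ContinuousMultilinearMap.cons_smul,
        ContinuousMultilinearMap.cons_smul, smul_eq_mul, smul_eq_mul, smul_eq_mul]
      ring
    have hqe : ∀ e : ℝ × ℝ × ℝ,
        (q e m fun _ => v) = p (m + 1) (Fin.cons e (fun _ : Fin m => v)) := fun e => rfl
    calc (p (m + 1) fun _ => v) = p (m + 1) (Fin.cons v (fun _ : Fin m => v)) := by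
          rw [hcons]
      _ = v.1 * (q et m fun _ => v) + v.2.1 * (q ex1 m fun _ => v)
            + v.2.2 * (q ex2 m fun _ => v) := by
          rw [key, ← hqe et, ← hqe ex1, ← hqe ex2]
  have hsum_rhs : HasSum (fun m => v.1 * (q et m fun _ => v) + v.2.1 * (q ex1 m fun _ => v)
      + v.2.2 * (q ex2 m fun _ => v))
      (v.1 * g et v + v.2.1 * g ex1 v + v.2.2 * g ex2 v) :=
    (((hsum_q et).mul_left v.1).add ((hsum_q ex1).mul_left v.2.1)).add
      ((hsum_q ex2).mul_left v.2.2)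
  have : HasSum (fun m => p (m + 1) fun _ => v)
      (v.1 * g et v + v.2.1 * g ex1 v + v.2.2 * g ex2 v) := by
    convert hsum_rhs using 1
    funext m
    exact hterm m
  exact hsum_f'.unique this

/-- The other coordinate germs. -/
def x1O3 : O3 := toO3 (fun p => p.2.1) (analyticAt_fst.comp analyticAt_snd)
def x2O3 : O3 := toO3 (fun p => p.2.2) (analyticAt_snd.comp analyticAt_snd)

/-- Evaluation of a germ at the origin. -/
def evg (g : Filter.Germ (𝓝 (0 : ℝ × ℝ × ℝ)) ℝ) : ℝ :=
  g.liftOn (fun f => f 0) (fun _ _ h => h.eq_of_nhds)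

theorem evg_coe (f : ℝ × ℝ × ℝ → ℝ) : evg (f : Filter.Germ (𝓝 (0 : ℝ × ℝ × ℝ)) ℝ) = f 0 := rfl

/-- Evaluation of an element of `O₃` at the origin. -/
def ev (g : O3) : ℝ := evg g.1

theorem ev_eq {g : O3} {f : ℝ × ℝ × ℝ → ℝ}
    (hfg : (g : Filter.Germ (𝓝 (0 : ℝ × ℝ × ℝ)) ℝ) = (f : Filter.Germ (𝓝 (0 : ℝ × ℝ × ℝ)) ℝ)) :
    ev g = f 0 := by
  unfold ev
  rw [hfg, evg_coe]

theorem ev_repr (g : O3) : ∃ f : ℝ × ℝ × ℝ → ℝ, AnalyticAt ℝ f 0 ∧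
    (g : Filter.Germ (𝓝 (0 : ℝ × ℝ × ℝ)) ℝ) = (f : Filter.Germ (𝓝 (0 : ℝ × ℝ × ℝ)) ℝ) ∧
    ev g = f 0 := by
  obtain ⟨f, hf, hfg⟩ := g.2
  exact ⟨f, hf, hfg, ev_eq hfg⟩

theorem ev_mul (a b : O3) : ev (a * b) = ev a * ev b := by
  obtain ⟨f, _, hf, hevf⟩ := ev_repr a
  obtain ⟨g, _, hg, hevg⟩ := ev_repr b
  have : ((a * b : O3) : Filter.Germ (𝓝 (0 : ℝ × ℝ × ℝ)) ℝ)
      = ((f * g : ℝ × ℝ × ℝ → ℝ) : Filter.Germ (𝓝 (0 : ℝ × ℝ × ℝ)) ℝ) := by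
    push_cast [hf, hg]
    rfl
  rw [ev_eq this, hevf, hevg]
  rfl

theorem ev_add (a b : O3) : ev (a + b) = ev a + ev b := by
  obtain ⟨f, _, hf, hevf⟩ := ev_repr a
  obtain ⟨g, _, hg, hevg⟩ := ev_repr b
  have : ((a + b : O3) : Filter.Germ (𝓝 (0 : ℝ × ℝ × ℝ)) ℝ)
      = ((f + g : ℝ × ℝ × ℝ → ℝ) : Filter.Germ (𝓝 (0 : ℝ × ℝ × ℝ)) ℝ) := by
    push_cast [hf, hg]
    rfl
  rw [ev_eq this, hevf, hevg]
  rfl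

theorem ev_one : ev (1 : O3) = 1 := rfl

theorem ev_pow (a : O3) (n : ℕ) : ev (a ^ n) = ev a ^ n := by
  induction n with
  | zero => simp [ev_one]
  | succ n ih => rw [pow_succ, ev_mul, ih, pow_succ]

theorem ev_smul (r : ℝ) (a : O3) : ev (r • a) = r * ev a := by
  obtain ⟨f, _, hf, hevf⟩ := ev_repr a
  have : ((r • a : O3) : Filter.Germ (𝓝 (0 : ℝ × ℝ × ℝ)) ℝ)
      = ((r • f : ℝ × ℝ × ℝ → ℝ) : Filter.Germ (𝓝 (0 : ℝ × ℝ × ℝ)) ℝ) := by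
    show r • (a : Filter.Germ (𝓝 (0 : ℝ × ℝ × ℝ)) ℝ) = _
    rw [hf, ← Filter.Germ.coe_smul]
  rw [ev_eq this, hevf]
  rfl

theorem ev_sub (a b : O3) : ev (a - b) = ev a - ev b := by
  have h : a = (a - b) + b := by ring
  have := ev_add (a - b) b
  rw [← h] at this
  linarith

theorem ev_zero : ev (0 : O3) = 0 := rfl

theorem ev_sum {ι : Type*} (s : Finset ι) (f : ι → O3) :
    ev (∑ i ∈ s, f i) = ∑ i ∈ s, ev (f i) := by
  classical
  induction s using Finset.induction with
  | empty => simp [ev_zero]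
  | @insert _ _ hx ih => rw [Finset.sum_insert hx, Finset.sum_insert hx, ev_add, ih]

theorem ev_tO3 : ev tO3 = 0 := rfl
theorem ev_x1O3 : ev x1O3 = 0 := rfl
theorem ev_x2O3 : ev x2O3 = 0 := rfl

/-- An element of `O₃` which does not vanish at the origin is a unit. -/
theorem isUnit_of_ev_ne_zero {u : O3} (hu : ev u ≠ 0) : IsUnit u := by
  obtain ⟨f, hf, hfu, hev⟩ := ev_repr u
  have hf0 : f 0 ≠ 0 := by rwa [hev] at hu
  refine IsUnit.of_mul_eq_one (a := u) (toO3 (fun p => (f p)⁻¹) (hf.inv hf0)) ?_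
  apply Subtype.ext
  show (u : Filter.Germ (𝓝 (0 : ℝ × ℝ × ℝ)) ℝ)
      * ((fun p => (f p)⁻¹ : ℝ × ℝ × ℝ → ℝ) : Filter.Germ (𝓝 (0 : ℝ × ℝ × ℝ)) ℝ)
      = ((1 : O3) : Filter.Germ (𝓝 (0 : ℝ × ℝ × ℝ)) ℝ)
  rw [hfu, ← Filter.Germ.coe_mul]
  have h1 : ((1 : O3) : Filter.Germ (𝓝 (0 : ℝ × ℝ × ℝ)) ℝ)
      = (((fun _ => (1 : ℝ)) : ℝ × ℝ × ℝ → ℝ) : Filter.Germ (𝓝 (0 : ℝ × ℝ × ℝ)) ℝ) := rfl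
  rw [h1, Filter.Germ.coe_eq]
  filter_upwards [hf.continuousAt.eventually_ne hf0] with p hp
  exact mul_inv_cancel₀ hp

/-- The maximal ideal of `O₃`, generated by the coordinate germs. -/
def mO3 : Ideal O3 := Ideal.span {tO3, x1O3, x2O3}

theorem mem_mO3_of_ev_eq_zero {g : O3} (hg : ev g = 0) : g ∈ mO3 := by
  obtain ⟨f, hf, hfg, hev⟩ := ev_repr g
  have hf0 : f 0 = 0 := by rwa [hev] at hg
  obtain ⟨a, b, c, ha, hb, hc, heq⟩ := hadamard3 hf hf0
  have hgeq : g = tO3 * toO3 a ha + x1O3 * toO3 b hb + x2O3 * toO3 c hc := by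
    apply Subtype.ext
    rw [hfg]
    show (f : Filter.Germ (𝓝 (0 : ℝ × ℝ × ℝ)) ℝ)
        = ((fun v => v.1 * a v + v.2.1 * b v + v.2.2 * c v) :
            Filter.Germ (𝓝 (0 : ℝ × ℝ × ℝ)) ℝ)
    rw [Filter.Germ.coe_eq]
    exact heq
  rw [hgeq]
  have ht : tO3 ∈ mO3 := Ideal.subset_span (by simp)
  have hx1 : x1O3 ∈ mO3 := Ideal.subset_span (by simp)
  have hx2 : x2O3 ∈ mO3 := Ideal.subset_span (by simp)
  exact add_mem (add_mem (Ideal.mul_mem_right _ _ ht) (Ideal.mul_mem_right _ _ hx1))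
    (Ideal.mul_mem_right _ _ hx2)

/-- In an ideal of finite codimension, some power of any germ vanishing at the origin
belongs to the ideal. -/
theorem exists_pow_mem (I : Ideal O3) (h : FiniteDimensional ℝ (O3 ⧸ I))
    (g : O3) (hg : ev g = 0) : ∃ k : ℕ, g ^ k ∈ I := by
  classical
  set d := Module.finrank ℝ (O3 ⧸ I) with hd
  have hnli : ¬ LinearIndependent ℝ (fun i : Fin (d + 1) =>
      Ideal.Quotient.mk I (g ^ (i : ℕ))) := by
    intro hli
    have h2 := hli.fintype_card_le_finrank
    rw [Fintype.card_fin, ← hd] at h2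
    omega
  obtain ⟨c, hc, i₀, hi₀⟩ := Fintype.not_linearIndependent_iff.1 hnli
  set c' : ℕ → ℝ := fun n => if h : n < d + 1 then c ⟨n, h⟩ else 0 with hc'
  have hc'i : ∀ i : Fin (d + 1), c' (i : ℕ) = c i := by
    intro i
    exact dif_pos i.2
  have hex : ∃ n, c' n ≠ 0 := ⟨i₀, by rw [hc'i]; exact hi₀⟩
  set k := Nat.find hex with hk
  have hck : c' k ≠ 0 := Nat.find_spec hex
  have hmin : ∀ m < k, c' m = 0 := by
    intro m hm
    by_contra hne
    have hle : k ≤ m := by rw [hk]; exact Nat.find_le hne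
    omega
  -- P = ∑ c' i • g ^ i ∈ I
  have hP : (∑ i ∈ Finset.range (d + 1), c' i • g ^ i) ∈ I := by
    rw [← Ideal.Quotient.eq_zero_iff_mem]
    have : Ideal.Quotient.mk I (∑ i ∈ Finset.range (d + 1), c' i • g ^ i)
        = ∑ i ∈ Finset.range (d + 1), c' i • Ideal.Quotient.mk I (g ^ i) := by
      rw [← Ideal.Quotient.mkₐ_eq_mk ℝ I, map_sum]
      simp [Ideal.Quotient.mkₐ_eq_mk]
    rw [this, ← Fin.sum_univ_eq_sum_range (fun i => c' i • Ideal.Quotient.mk I (g ^ i)) (d + 1)]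
    calc (∑ i : Fin (d + 1), c' (i : ℕ) • Ideal.Quotient.mk I (g ^ (i : ℕ)))
        = ∑ i : Fin (d + 1), c i • Ideal.Quotient.mk I (g ^ (i : ℕ)) := by
          refine Finset.sum_congr rfl fun i _ => by rw [hc'i]
      _ = 0 := hc
  set u : O3 := ∑ i ∈ Finset.range (d + 1), c' i • g ^ (i - k) with hu
  have hfac : g ^ k * u = ∑ i ∈ Finset.range (d + 1), c' i • g ^ i := by
    rw [hu, Finset.mul_sum]
    refine Finset.sum_congr rfl fun i hi => ?_
    by_cases hci : c' i = 0
    · simp [hci]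
    · have hki : k ≤ i := le_of_not_gt fun hlt => hci (hmin i hlt)
      rw [mul_smul_comm, ← pow_add, Nat.add_sub_cancel' hki]
  have hevu : ev u = c' k := by
    have hkd : k < d + 1 :=
      lt_of_le_of_lt (Nat.find_le (show c' (i₀ : ℕ) ≠ 0 by rw [hc'i]; exact hi₀)) i₀.2
    rw [hu, ev_sum, Finset.sum_eq_single k]
    · rw [ev_smul, Nat.sub_self, pow_zero, ev_one, mul_one]
    · intro i _ hik
      rw [ev_smul, ev_pow, hg]
      rcases lt_or_gt_of_ne hik with hlt | hgt
      · rw [hmin i hlt]; ring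
      · rw [zero_pow (by omega : i - k ≠ 0)]; ring
    · intro hk'
      exact absurd (Finset.mem_range.2 hkd) hk' 
  have hunit : IsUnit u := isUnit_of_ev_ne_zero (by rw [hevu]; exact hck)
  obtain ⟨v, hv⟩ := hunit.exists_right_inv
  refine ⟨k, ?_⟩
  have : g ^ k = (∑ i ∈ Finset.range (d + 1), c' i • g ^ i) * v := by
    rw [← hfac, mul_assoc, hv, mul_one]
  rw [this]
  exact Ideal.mul_mem_right _ _ hP

end Aux

section Aux2

open Filter

/-- `σ`-substitution on powers of the coordinate germs. -/
theorem val_pow (a : O3) (n : ℕ) :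
    ((a ^ n : O3) : Filter.Germ (𝓝 (0 : ℝ × ℝ × ℝ)) ℝ)
      = (a : Filter.Germ (𝓝 (0 : ℝ × ℝ × ℝ)) ℝ) ^ n :=
  SubmonoidClass.coe_pow a n

theorem germ_fun_pow (f : ℝ × ℝ × ℝ → ℝ) (n : ℕ) :
    ((f : Filter.Germ (𝓝 (0 : ℝ × ℝ × ℝ)) ℝ)) ^ n
      = ((fun p => f p ^ n : ℝ × ℝ × ℝ → ℝ) : Filter.Germ (𝓝 (0 : ℝ × ℝ × ℝ)) ℝ) := by
  induction n with
  | zero =>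
    have h1 : (fun p => f p ^ 0 : ℝ × ℝ × ℝ → ℝ) = fun _ => 1 := by
      funext p; rw [pow_zero]
    rw [pow_zero, h1]
    exact Filter.Germ.coe_one.symm
  | succ n ih =>
    rw [pow_succ, ih, ← Filter.Germ.coe_mul]
    refine Filter.Germ.coe_eq.mpr (Filter.Eventually.of_forall fun p => ?_)
    show f p ^ n * f p = f p ^ (n + 1)
    rw [pow_succ]

theorem compSigma_t_pow (k : ℕ) : compSigmaO3 (tO3 ^ k) = tO3 ^ (2 * k) := by
  apply Subtype.ext
  show ((tO3 ^ k : O3) : Filter.Germ (𝓝 (0 : ℝ × ℝ × ℝ)) ℝ).compTendsto sigma3 sigma3_tendsto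
      = ((tO3 ^ (2 * k) : O3) : Filter.Germ (𝓝 (0 : ℝ × ℝ × ℝ)) ℝ)
  rw [val_pow, val_pow]
  show (((fun p => p.1 : ℝ × ℝ × ℝ → ℝ) : Filter.Germ (𝓝 (0 : ℝ × ℝ × ℝ)) ℝ) ^ k).compTendsto
      sigma3 sigma3_tendsto
      = ((fun p => p.1 : ℝ × ℝ × ℝ → ℝ) : Filter.Germ (𝓝 (0 : ℝ × ℝ × ℝ)) ℝ) ^ (2 * k)
  rw [germ_fun_pow, germ_fun_pow, Filter.Germ.coe_compTendsto]
  refine Filter.Germ.coe_eq.mpr (Filter.Eventually.of_forall fun p => ?_)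
  show (sigma3 p).1 ^ k = p.1 ^ (2 * k)
  rw [pow_mul]
  rfl

theorem compSigma_x1_pow (k : ℕ) : compSigmaO3 (x1O3 ^ k) = x1O3 ^ k := by
  apply Subtype.ext
  show ((x1O3 ^ k : O3) : Filter.Germ (𝓝 (0 : ℝ × ℝ × ℝ)) ℝ).compTendsto sigma3 sigma3_tendsto
      = ((x1O3 ^ k : O3) : Filter.Germ (𝓝 (0 : ℝ × ℝ × ℝ)) ℝ)
  rw [val_pow]
  show (((fun p => p.2.1 : ℝ × ℝ × ℝ → ℝ) : Filter.Germ (𝓝 (0 : ℝ × ℝ × ℝ)) ℝ) ^ k).compTendsto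
      sigma3 sigma3_tendsto
      = (((fun p => p.2.1 : ℝ × ℝ × ℝ → ℝ) : Filter.Germ (𝓝 (0 : ℝ × ℝ × ℝ)) ℝ)) ^ k
  rw [germ_fun_pow, Filter.Germ.coe_compTendsto]
  rfl

theorem compSigma_x2_pow (k : ℕ) : compSigmaO3 (x2O3 ^ k) = x2O3 ^ k := by
  apply Subtype.ext
  show ((x2O3 ^ k : O3) : Filter.Germ (𝓝 (0 : ℝ × ℝ × ℝ)) ℝ).compTendsto sigma3 sigma3_tendsto
      = ((x2O3 ^ k : O3) : Filter.Germ (𝓝 (0 : ℝ × ℝ × ℝ)) ℝ)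
  rw [val_pow]
  show (((fun p => p.2.2 : ℝ × ℝ × ℝ → ℝ) : Filter.Germ (𝓝 (0 : ℝ × ℝ × ℝ)) ℝ) ^ k).compTendsto
      sigma3 sigma3_tendsto
      = (((fun p => p.2.2 : ℝ × ℝ × ℝ → ℝ) : Filter.Germ (𝓝 (0 : ℝ × ℝ × ℝ)) ℝ)) ^ k
  rw [germ_fun_pow, Filter.Germ.coe_compTendsto]
  rfl

/-- Monomials in the coordinate germs. -/
def monO3 (n : ℕ × ℕ × ℕ) : O3 := tO3 ^ n.1 * x1O3 ^ n.2.1 * x2O3 ^ n.2.2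

/-- The monomials of multidegree `< M` in each variable. -/
def SM (M : ℕ) : Set O3 :=
  monO3 '' ↑(Finset.range M ×ˢ (Finset.range M ×ˢ Finset.range M))

theorem SM_finite (M : ℕ) : (SM M).Finite :=
  (Finset.finite_toSet _).image _

theorem mem_SM {M i j k : ℕ} (hi : i < M) (hj : j < M) (hk : k < M) :
    monO3 (i, j, k) ∈ SM M :=
  ⟨(i, j, k), by simp [hi, hj, hk], rfl⟩

/-- The key filtration submodules. -/
def AM (M : ℕ) : Submodule ℝ O3 :=
  Submodule.span ℝ (SM M) ⊔ Submodule.restrictScalars ℝ ((mO3 ^ M : Ideal O3) : Submodule O3 O3)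

theorem mul_span_SM {M : ℕ} {x : O3} (hx : x ∈ ({tO3, x1O3, x2O3} : Set O3))
    {s : O3} (hs : s ∈ Submodule.span ℝ (SM M)) :
    x * s ∈ Submodule.span ℝ (SM (M + 1)) := by
  induction hs using Submodule.span_induction with
  | mem z hz =>
    obtain ⟨⟨i, j, k⟩, hijk, rfl⟩ := hz
    simp only [Finset.coe_product, Set.mem_prod, Finset.mem_coe, Finset.mem_range] at hijk
    obtain ⟨hi, hj, hk⟩ := hijk
    rcases hx with rfl | rfl | rfl
    · have hmul : tO3 * monO3 (i, j, k) = monO3 (i + 1, j, k) := by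
        show tO3 * (tO3 ^ i * x1O3 ^ j * x2O3 ^ k) = tO3 ^ (i + 1) * x1O3 ^ j * x2O3 ^ k
        rw [pow_succ]; ring
      rw [hmul]
      exact Submodule.subset_span (mem_SM (by omega) (by omega) (by omega))
    · have hmul : x1O3 * monO3 (i, j, k) = monO3 (i, j + 1, k) := by
        show x1O3 * (tO3 ^ i * x1O3 ^ j * x2O3 ^ k) = tO3 ^ i * x1O3 ^ (j + 1) * x2O3 ^ k
        rw [pow_succ]; ring
      rw [hmul]
      exact Submodule.subset_span (mem_SM (by omega) (by omega) (by omega))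
    · have hmul : x2O3 * monO3 (i, j, k) = monO3 (i, j, k + 1) := by
        show x2O3 * (tO3 ^ i * x1O3 ^ j * x2O3 ^ k) = tO3 ^ i * x1O3 ^ j * x2O3 ^ (k + 1)
        rw [pow_succ]; ring
      rw [hmul]
      exact Submodule.subset_span (mem_SM (by omega) (by omega) (by omega))
  | zero => rw [mul_zero]; exact zero_mem _
  | add y z _ _ hy hz => rw [mul_add]; exact add_mem hy hz
  | smul r y _ hy => rw [mul_smul_comm]; exact Submodule.smul_mem _ _ hy

theorem mul_mem_AM {M : ℕ} {x : O3} (hx : x ∈ ({tO3, x1O3, x2O3} : Set O3))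
    {a : O3} (ha : a ∈ AM M) : x * a ∈ AM (M + 1) := by
  obtain ⟨s, hs, w, hw, rfl⟩ := Submodule.mem_sup.1 ha
  rw [mul_add]
  refine add_mem (Submodule.mem_sup_left (mul_span_SM hx hs)) (Submodule.mem_sup_right ?_)
  show x * w ∈ (mO3 ^ (M + 1) : Ideal O3)
  rw [pow_succ']
  exact Ideal.mul_mem_mul (Ideal.subset_span hx) hw

theorem taylor_mem (M : ℕ) : ∀ g : O3, g ∈ AM M := by
  induction M with
  | zero =>
    intro g
    refine Submodule.mem_sup_right ?_
    show g ∈ (mO3 ^ 0 : Ideal O3)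
    rw [pow_zero, Ideal.one_eq_top]
    trivial
  | succ M ih =>
    intro g
    have hdec : g = ev g • (1 : O3) + (g - ev g • (1 : O3)) := by ring
    rw [hdec]
    refine add_mem ?_ ?_
    · refine Submodule.mem_sup_left (Submodule.smul_mem _ _ (Submodule.subset_span ?_))
      have h1 : (1 : O3) = monO3 (0, 0, 0) := by simp [monO3]
      rw [h1]
      exact mem_SM (by omega) (by omega) (by omega)
    · have h0 : ev (g - ev g • (1 : O3)) = 0 := by
        rw [ev_sub, ev_smul, ev_one]; ring
      have hm := mem_mO3_of_ev_eq_zero h0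
      rw [mO3] at hm
      obtain ⟨a, z, hz, hrep⟩ := Submodule.mem_span_insert.1 hm
      obtain ⟨b, z', hz', hrep'⟩ := Submodule.mem_span_insert.1 hz
      obtain ⟨c, hrep''⟩ := Submodule.mem_span_singleton.1 hz'
      rw [hrep, hrep', ← hrep'']
      have ht : a • tO3 = tO3 * a := by rw [smul_eq_mul, mul_comm]
      have hx1 : b • x1O3 = x1O3 * b := by rw [smul_eq_mul, mul_comm]
      have hx2 : c • x2O3 = x2O3 * c := by rw [smul_eq_mul, mul_comm]
      rw [ht, hx1, hx2]
      exact add_mem (mul_mem_AM (by simp) (ih a))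
        (add_mem (mul_mem_AM (by simp) (ih b)) (mul_mem_AM (by simp) (ih c)))

end Aux2

/-- Let `I ⊆ O₃` be an ideal with `dim_ℝ O₃/I < ∞`, let `σ : ℝ³ → ℝ³` be the map
`σ(t,x₁,x₂) = (t², x₁, x₂)`, and let `I∘σ` denote the ideal of `O₃` generated by all germs
`h∘σ` with `h ∈ I`. Then `dim_ℝ O₃/(I∘σ) < ∞`. -/
theorem finiteDimensional_quotient_comp_sigma (I : Ideal O3)
    (h : FiniteDimensional ℝ (O3 ⧸ I)) :
    FiniteDimensional ℝ (O3 ⧸ Ideal.span (compSigmaO3 '' (I : Set O3))) := by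
  classical
  set J := Ideal.span (compSigmaO3 '' (I : Set O3)) with hJ
  obtain ⟨k, hk⟩ := exists_pow_mem I h tO3 ev_tO3
  obtain ⟨k1, hk1⟩ := exists_pow_mem I h x1O3 ev_x1O3
  obtain ⟨k2, hk2⟩ := exists_pow_mem I h x2O3 ev_x2O3
  have htJ : tO3 ^ (2 * k) ∈ J := by
    rw [← compSigma_t_pow]
    exact Ideal.subset_span ⟨tO3 ^ k, hk, rfl⟩
  have hx1J : x1O3 ^ k1 ∈ J := by
    rw [← compSigma_x1_pow]
    exact Ideal.subset_span ⟨x1O3 ^ k1, hk1, rfl⟩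
  have hx2J : x2O3 ^ k2 ∈ J := by
    rw [← compSigma_x2_pow]
    exact Ideal.subset_span ⟨x2O3 ^ k2, hk2, rfl⟩
  set M := 2 * k + k1 + k2 with hM
  have hmsup : mO3 = (Ideal.span {tO3} ⊔ Ideal.span {x1O3}) ⊔ Ideal.span {x2O3} := by
    rw [mO3, Ideal.span_insert, Ideal.span_insert, sup_assoc]
  have hpow : mO3 ^ M ≤ J := by
    calc mO3 ^ M
        = ((Ideal.span {tO3} ⊔ Ideal.span {x1O3}) ⊔ Ideal.span {x2O3}) ^ (2 * k + k1 + k2) := by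
          rw [hmsup]
      _ ≤ (Ideal.span {tO3} ⊔ Ideal.span {x1O3}) ^ (2 * k + k1) ⊔ Ideal.span {x2O3} ^ k2 :=
          Ideal.sup_pow_add_le_pow_sup_pow
      _ ≤ (Ideal.span {tO3} ^ (2 * k) ⊔ Ideal.span {x1O3} ^ k1) ⊔ Ideal.span {x2O3} ^ k2 :=
          sup_le_sup_right Ideal.sup_pow_add_le_pow_sup_pow _
      _ ≤ J := by
          refine sup_le (sup_le ?_ ?_) ?_ <;>
            rw [Ideal.span_singleton_pow, Ideal.span_le, Set.singleton_subset_iff]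
          exacts [htJ, hx1J, hx2J]
  have hspan : Submodule.span ℝ ((Ideal.Quotient.mk J) '' SM M) = ⊤ := by
    rw [Submodule.eq_top_iff']
    intro q
    obtain ⟨g, rfl⟩ := Ideal.Quotient.mk_surjective q
    obtain ⟨s, hs, w, hw, hgsw⟩ := Submodule.mem_sup.1 (taylor_mem M g)
    have hw' : w ∈ J := hpow hw
    have hmk : Ideal.Quotient.mk J g = Ideal.Quotient.mk J s := by
      rw [← hgsw, map_add, Ideal.Quotient.eq_zero_iff_mem.2 hw', add_zero]
    rw [hmk]
    have := Submodule.apply_mem_span_image_of_mem_span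
      (f := (Ideal.Quotient.mkₐ ℝ J).toLinearMap) hs
    simpa [Ideal.Quotient.mkₐ_eq_mk] using this
  exact Module.finite_def.mpr (Submodule.fg_def.mpr
    ⟨(Ideal.Quotient.mk J) '' SM M, (SM_finite M).image _, hspan⟩)

end
end
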